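/- Let λ, μ : F^× → N be continuous group homomorphisms. If there exists a GL_n(F)-equivariant group isomorphism E(λ) → E(μ) that restricts to the identity on the common subgroup v_r(N) and commutes with the degree maps to ℤ (i.e., the extensions E(λ) and E(μ) of ℤ by v_r(N) are equivalent), then λ = μ. In other words, the map λ ↦ c_λ from continuous homomorphisms F^× → N to equivalence classes of extensions of ℤ by v_r(N) is injective. -/

import Mathlib

open Matrix

/-- The submodule of `Fin n → F` spanned by the first `r` standard basis vectors. -/
def stdFlag (F : Type*) [Field F] (n r : ℕ) : Submodule F (Fin n → F) where
  carrier := {v | ∀ i : Fin n, r ≤ (i : ℕ) → v i = 0}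
  add_mem' := fun {a b} ha hb i hi => by simp [ha i hi, hb i hi]
  zero_mem' := fun i _ => rfl
  smul_mem' := fun c {v} hv i hi => by simp [hv i hi]

/-- The block upper-triangularity condition cutting out the maximal parabolic of type
`(r, n-r)`: the `(i,j)` entry vanishes whenever `i ≥ r` and `j < r`. -/
def IsParMat {F : Type*} [Field F] {n : ℕ} (r : ℕ) (M : Matrix (Fin n) (Fin n) F) : Prop :=
  ∀ i j : Fin n, r ≤ (i : ℕ) → (j : ℕ) < r → M i j = 0

lemma isParMat_iff_mapsTo {F : Type*} [Field F] {n r : ℕ} {M : Matrix (Fin n) (Fin n) F} :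
    IsParMat r M ↔ ∀ v ∈ stdFlag F n r, M.mulVec v ∈ stdFlag F n r := by
  constructor
  · intro h v hv i hi
    simp only [Matrix.mulVec, dotProduct]
    refine Finset.sum_eq_zero fun j _ => ?_
    rcases lt_or_ge (j : ℕ) r with hj | hj
    · rw [h i j hi hj, zero_mul]
    · rw [hv j hj, mul_zero]
  · intro h i j hi hj
    have hmem : (Pi.single j (1 : F)) ∈ stdFlag F n r := by
      intro k hk
      apply Pi.single_eq_of_ne
      intro hkj
      rw [hkj] at hk
      omega
    have h2 := h _ hmem i hi
    rw [Matrix.mulVec_single] at h2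
    simpa using h2

/-- The maximal parabolic subgroup of `GL_n(F)` of type `(r, n-r)`: block upper-triangular
invertible matrices, i.e. the stabilizer of the span of the first `r` standard basis vectors. -/
def Parabolic (F : Type*) [Field F] (n r : ℕ) : Subgroup (GL (Fin n) F) where
  carrier := {g | IsParMat r (g : Matrix (Fin n) (Fin n) F)}
  one_mem' := by
    intro i j hi hj
    have hne : i ≠ j := by
      intro h; rw [h] at hi; omega
    exact Matrix.one_apply_ne hne
  mul_mem' := by
    intro a b ha hb i j hi hj
    show ((a : Matrix (Fin n) (Fin n) F) * b) i j = 0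
    rw [Matrix.mul_apply]
    refine Finset.sum_eq_zero fun k _ => ?_
    rcases lt_or_ge (k : ℕ) r with hk | hk
    · rw [ha i k hi hk, zero_mul]
    · rw [hb k j hk hj, mul_zero]
  inv_mem' := by
    intro g hg
    have hres : ∀ v ∈ stdFlag F n r,
        (Matrix.toLin' (g : Matrix (Fin n) (Fin n) F)) v ∈ stdFlag F n r := by
      intro v hv
      simpa [Matrix.toLin'_apply] using isParMat_iff_mapsTo.mp hg v hv
    set f := (Matrix.toLin' (g : Matrix (Fin n) (Fin n) F)).restrict hres with hf
    have hginj : Function.Injective ((g : Matrix (Fin n) (Fin n) F).mulVec) :=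
      Matrix.mulVec_injective_iff_isUnit.mpr ⟨g, rfl⟩
    have hinj : Function.Injective f := by
      intro x y hxy
      apply Subtype.ext
      apply hginj
      have h3 := congrArg Subtype.val hxy
      simpa [hf, LinearMap.restrict_apply, Matrix.toLin'_apply] using h3
    have hsurj := (LinearMap.injective_iff_surjective (f := f)).mp hinj
    rw [Set.mem_setOf_eq, isParMat_iff_mapsTo]
    intro v hv
    obtain ⟨w, hw⟩ := hsurj ⟨v, hv⟩
    have hw' : (g : Matrix (Fin n) (Fin n) F).mulVec w.1 = v := by
      have h4 := congrArg Subtype.val hw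
      simpa [hf, LinearMap.restrict_apply, Matrix.toLin'_apply] using h4
    have hcalc : ((g⁻¹ : GL (Fin n) F) : Matrix (Fin n) (Fin n) F).mulVec v = w.1 := by
      rw [← hw', Matrix.mulVec_mulVec, ← Units.val_mul, inv_mul_cancel, Units.val_one,
        Matrix.one_mulVec]
    rw [hcalc]
    exact w.2

/-- Identification of `Fin n` with `Fin r ⊕ Fin (n-r)`. -/
def blockEquiv (n r : ℕ) (h : r ≤ n) : Fin r ⊕ Fin (n - r) ≃ Fin n :=
  finSumFinEquiv.trans (finCongr (Nat.add_sub_cancel' h))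

/-- The upper-left `r × r` block `A_g` of a matrix `g ∈ GL_n(F)`. -/
def Ablock {F : Type*} [Field F] {n : ℕ} (r : ℕ) (h : r ≤ n) (g : GL (Fin n) F) :
    Matrix (Fin r) (Fin r) F :=
  Matrix.toBlocks₁₁
    ((g : Matrix (Fin n) (Fin n) F).submatrix (blockEquiv n r h) (blockEquiv n r h))

/-- The lower-right `(n-r) × (n-r)` block `D_g` of a matrix `g ∈ GL_n(F)`. -/
def Dblock {F : Type*} [Field F] {n : ℕ} (r : ℕ) (h : r ≤ n) (g : GL (Fin n) F) :
    Matrix (Fin (n - r)) (Fin (n - r)) F :=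
  Matrix.toBlocks₂₂
    ((g : Matrix (Fin n) (Fin n) F).submatrix (blockEquiv n r h) (blockEquiv n r h))

lemma isUnit_det_blocks {F : Type*} [Field F] {n r : ℕ} (h : r ≤ n) {g : GL (Fin n) F}
    (hg : g ∈ Parabolic F n r) :
    IsUnit (Ablock r h g).det ∧ IsUnit (Dblock r h g).det := by
  set M := (g : Matrix (Fin n) (Fin n) F).submatrix (blockEquiv n r h) (blockEquiv n r h)
    with hM
  have h21 : M.toBlocks₂₁ = 0 := by
    ext i j
    show (g : Matrix (Fin n) (Fin n) F)
      (blockEquiv n r h (Sum.inr i)) (blockEquiv n r h (Sum.inl j)) = 0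
    apply hg
    · show r ≤ ((blockEquiv n r h) (Sum.inr i) : ℕ)
      simp [blockEquiv]
    · show ((blockEquiv n r h) (Sum.inl j) : ℕ) < r
      simp [blockEquiv]
  have hdet : (g : Matrix (Fin n) (Fin n) F).det = (Ablock r h g).det * (Dblock r h g).det := by
    have h1 : M.det = (g : Matrix (Fin n) (Fin n) F).det :=
      Matrix.det_submatrix_equiv_self _ _
    have h2 : M = Matrix.fromBlocks M.toBlocks₁₁ M.toBlocks₁₂ 0 M.toBlocks₂₂ := by
      rw [← h21]
      exact (Matrix.fromBlocks_toBlocks M).symm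
    rw [← h1]
    conv_lhs => rw [h2]
    rw [Matrix.det_fromBlocks_zero₂₁]
    rfl
  have hu : IsUnit ((g : Matrix (Fin n) (Fin n) F).det) :=
    (Matrix.isUnit_iff_isUnit_det _).mp ⟨g, rfl⟩
  rw [hdet] at hu
  constructor
  · exact isUnit_of_mul_isUnit_left hu
  · rw [mul_comm] at hu
    exact isUnit_of_mul_isUnit_left hu

/-- The determinant of the upper-left block of an element of `P`, as a unit of `F`. -/
noncomputable def AblockDetUnit {F : Type*} [Field F] {n r : ℕ} (h : r ≤ n)
    (g : GL (Fin n) F) (hg : g ∈ Parabolic F n r) : Fˣ :=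
  ((isUnit_det_blocks h hg).1).unit

/-- The determinant of the lower-right block of an element of `P`, as a unit of `F`. -/
noncomputable def DblockDetUnit {F : Type*} [Field F] {n r : ℕ} (h : r ≤ n)
    (g : GL (Fin n) F) (hg : g ∈ Parabolic F n r) : Fˣ :=
  ((isUnit_det_blocks h hg).2).unit
set_option linter.unusedSectionVars false
section EDefs

variable (F : Type*) [NontriviallyNormedField F] [IsUltrametricDist F]
  [CompleteSpace F] [LocallyCompactSpace F] (n r : ℕ) (hrn : r ≤ n)
  (N : Type*) [AddCommGroup N] [TopologicalSpace N] [IsTopologicalAddGroup N]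

/-- The group `Ẽ(λ)` of pairs `(Φ, k)` with `Φ : GL_n(F) → N` continuous satisfying
`Φ(g·p) = Φ(g) + k·λ(det A_p)` for all `g ∈ GL_n(F)` and `p ∈ P`. -/
def Etilde (lam : Fˣ → N) : AddSubgroup ((GL (Fin n) F → N) × ℤ) where
  carrier := {q | Continuous q.1 ∧ ∀ (g p : GL (Fin n) F) (hp : p ∈ Parabolic F n r),
      q.1 (g * p) = q.1 g + q.2 • lam (AblockDetUnit hrn p hp)}
  add_mem' := by
    rintro a b ⟨hac, ha⟩ ⟨hbc, hb⟩
    refine ⟨hac.add hbc, fun g p hp => ?_⟩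
    show a.1 (g * p) + b.1 (g * p) = (a.1 g + b.1 g) + (a.2 + b.2) • lam _
    rw [ha g p hp, hb g p hp, add_zsmul]
    abel
  zero_mem' := by
    refine ⟨continuous_const, fun g p hp => ?_⟩
    show (0 : N) = 0 + (0 : ℤ) • lam _
    simp
  neg_mem' := by
    rintro a ⟨hac, ha⟩
    refine ⟨hac.neg, fun g p hp => ?_⟩
    show -a.1 (g * p) = -a.1 g + (-a.2) • lam _
    rw [ha g p hp, neg_zsmul]
    abel

/-- The subgroup of `Ẽ(λ)` of pairs `(Φ, 0)` with `Φ` constant. -/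
def EtildeConsts (lam : Fˣ → N) : AddSubgroup ↥(Etilde F n r hrn N lam) where
  carrier := {q | q.1.2 = 0 ∧ ∃ c : N, ∀ g : GL (Fin n) F, q.1.1 g = c}
  add_mem' := by
    rintro a b ⟨ha0, c, hc⟩ ⟨hb0, d, hd⟩
    refine ⟨?_, c + d, fun g => ?_⟩
    · show a.1.2 + b.1.2 = 0
      rw [ha0, hb0]; rfl
    · show a.1.1 g + b.1.1 g = c + d
      rw [hc g, hd g]
  zero_mem' := ⟨rfl, 0, fun g => rfl⟩
  neg_mem' := by
    rintro a ⟨ha0, c, hc⟩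
    refine ⟨?_, -c, fun g => ?_⟩
    · show -a.1.2 = 0
      rw [ha0]; rfl
    · show -a.1.1 g = -c
      rw [hc g]

/-- The extension `E(λ)`: the quotient of `Ẽ(λ)` by the constant functions of degree `0`. -/
abbrev Esp (lam : Fˣ → N) :=
  ↥(Etilde F n r hrn N lam) ⧸ EtildeConsts F n r hrn N lam

/-- The degree map `E(λ) → ℤ`, `(Φ, k) ↦ k`. -/
def Edeg (lam : Fˣ → N) : Esp F n r hrn N lam →+ ℤ :=
  QuotientAddGroup.lift _
    ((AddMonoidHom.snd (GL (Fin n) F → N) ℤ).comp (Etilde F n r hrn N lam).subtype)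
    (by rintro q ⟨h0, -⟩; exact h0)

@[simp] lemma Edeg_mk (lam : Fˣ → N) (q : ↥(Etilde F n r hrn N lam)) :
    Edeg F n r hrn N lam (QuotientAddGroup.mk q) = q.1.2 := rfl

/-- The group of continuous right-`P`-invariant functions `GL_n(F) → N`; modulo constants
this is the generalized Steinberg representation `v_r(N)`. -/
def SteinbergFns : AddSubgroup (GL (Fin n) F → N) where
  carrier := {Φ | Continuous Φ ∧ ∀ (g p : GL (Fin n) F), p ∈ Parabolic F n r → Φ (g * p) = Φ g}
  add_mem' := by
    rintro a b ⟨hac, ha⟩ ⟨hbc, hb⟩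
    exact ⟨hac.add hbc, fun g p hp => by
      show a (g * p) + b (g * p) = a g + b g
      rw [ha g p hp, hb g p hp]⟩
  zero_mem' := ⟨continuous_const, fun _ _ _ => rfl⟩
  neg_mem' := by
    rintro a ⟨hac, ha⟩
    exact ⟨hac.neg, fun g p hp => by
      show -a (g * p) = -a g
      rw [ha g p hp]⟩

/-- `v_r(N)`-vectors, included into `Ẽ(λ)` as the pairs `(Φ, 0)`. -/
def stIncl (lam : Fˣ → N) : ↥(SteinbergFns F n r N) →+ ↥(Etilde F n r hrn N lam) where
  toFun := fun Φ => ⟨(Φ.1, 0), Φ.2.1, fun g p hp => by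
    show Φ.1 (g * p) = Φ.1 g + (0 : ℤ) • lam _
    rw [Φ.2.2 g p hp]; simp⟩
  map_zero' := rfl
  map_add' := fun a b => by
    apply Subtype.ext
    apply Prod.ext rfl
    show (0 : ℤ) = 0 + 0
    simp

/-- The inclusion of `v_r(N)` into `E(λ)` as the classes of pairs `(Φ, 0)`. -/
def stHom (lam : Fˣ → N) : ↥(SteinbergFns F n r N) →+ Esp F n r hrn N lam :=
  (QuotientAddGroup.mk' (EtildeConsts F n r hrn N lam)).comp (stIncl F n r hrn N lam)

@[simp] lemma Edeg_stHom (lam : Fˣ → N) (v : ↥(SteinbergFns F n r N)) :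
    Edeg F n r hrn N lam (stHom F n r hrn N lam v) = 0 := rfl

/-- Left translation on `Ẽ(λ)` by an element of `GL_n(F)`. -/
def EtransAux (lam : Fˣ → N) (h : GL (Fin n) F) :
    ↥(Etilde F n r hrn N lam) →+ ↥(Etilde F n r hrn N lam) where
  toFun := fun q => ⟨(fun g => q.1.1 (h⁻¹ * g), q.1.2),
    q.2.1.comp ((continuous_mul_left h⁻¹)),
    fun g p hp => by
      show q.1.1 (h⁻¹ * (g * p)) = q.1.1 (h⁻¹ * g) + q.1.2 • lam _
      rw [← mul_assoc]
      exact q.2.2 (h⁻¹ * g) p hp⟩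
  map_zero' := rfl
  map_add' := fun a b => rfl

/-- The `GL_n(F)`-action on `E(λ)` by left translation, `(h • Φ)(g) = Φ(h⁻¹ g)`. -/
def Etrans (lam : Fˣ → N) (h : GL (Fin n) F) :
    Esp F n r hrn N lam →+ Esp F n r hrn N lam :=
  QuotientAddGroup.map _ _ (EtransAux F n r hrn N lam h) (by
    rintro q ⟨h0, c, hc⟩
    exact ⟨h0, c, fun g => hc _⟩)

@[simp] lemma Etrans_mk (lam : Fˣ → N) (h : GL (Fin n) F) (q : ↥(Etilde F n r hrn N lam)) :
    Etrans F n r hrn N lam h (QuotientAddGroup.mk q)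
      = QuotientAddGroup.mk (EtransAux F n r hrn N lam h q) := rfl

end EDefs

/-! A class of degree one in `E(λ)` is given by a continuous `Φ` with
`Φ(gp) = Φ(g) + λ(det A_p)`: take the Plücker coordinates of the span of the first `r` columns
of `g`, which get multiplied by `det A_p` when `g` is replaced by `gp`, and apply `λ` to a
coordinate of maximal absolute value. By the ultrametric inequality the set of maximal
coordinates is locally constant, so `Φ` is continuous.

If `θ` sends `[Φ, 1]` to `[Ψ, 1]`, then for each `h` the difference `h • [Φ, 1] - [Φ, 1]` lies
in `v_r(N)` and is fixed by `θ`, so left translation by `h` changes `Ψ - Φ` by a constant.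
Hence `g ↦ (Ψ - Φ)(g) - (Ψ - Φ)(1)` is a homomorphism `GL_n(F) → N`, equal to
`p ↦ (μ - λ)(det A_p)` on `P`. Being abelian-valued it is constant on conjugacy classes, and
`diag(a, 1, …, 1)` is conjugate to the matrix with `a` in position `r`, whose upper-left block
has determinant `1`. Thus `μ - λ` vanishes. -/

open Topology

section LeadingCoordinate

variable {ι F N : Type*} [Fintype ι] [Nonempty ι] [NormedField F]

-- `Classical.epsilon` sees only the set of maximal coordinates, so any change of `x` preserving
-- that set (scaling, small perturbation) preserves the index.
noncomputable def leadingIndex (x : ι → F) : ι :=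
  Classical.epsilon fun i => ‖x i‖ = ‖x‖

lemma norm_apply_leadingIndex (x : ι → F) : ‖x (leadingIndex x)‖ = ‖x‖ :=
  Classical.epsilon_spec (IsGreatest.pi_norm x).1

lemma apply_leadingIndex_ne_zero {x : ι → F} (hx : x ≠ 0) : x (leadingIndex x) ≠ 0 := by
  rw [← norm_ne_zero_iff, norm_apply_leadingIndex, norm_ne_zero_iff]
  exact hx

lemma leadingIndex_smul {c : F} (hc : c ≠ 0) (x : ι → F) :
    leadingIndex (c • x) = leadingIndex x := by
  have hc' : ‖c‖ ≠ 0 := norm_ne_zero_iff.2 hc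
  simp only [leadingIndex, Pi.smul_apply, norm_smul, smul_eq_mul, norm_mul, mul_right_inj' hc']

lemma IsUltrametricDist.norm_eq_of_norm_sub_lt {E : Type*} [SeminormedAddCommGroup E]
    [IsUltrametricDist E] {x y : E} (h : ‖y - x‖ < ‖x‖) : ‖y‖ = ‖x‖ := by
  simpa [max_eq_left h.le] using
    IsUltrametricDist.norm_add_eq_max_of_norm_ne_norm h.ne'

lemma leadingIndex_eq_of_norm_sub_lt [IsUltrametricDist F] {x y : ι → F}
    (h : ‖y - x‖ < ‖x‖) : leadingIndex y = leadingIndex x := by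
  have hy : ‖y‖ = ‖x‖ := IsUltrametricDist.norm_eq_of_norm_sub_lt h
  suffices ∀ i, ‖y i‖ = ‖y‖ ↔ ‖x i‖ = ‖x‖ by
    simp only [leadingIndex, this]
  intro i
  have hi : ‖y i - x i‖ < ‖x‖ := (norm_le_pi_norm (y - x) i).trans_lt h
  rw [hy]
  rcases (norm_le_pi_norm x i).eq_or_lt with hxi | hxi
  · rw [← hxi] at hi ⊢
    simp [IsUltrametricDist.norm_eq_of_norm_sub_lt hi]
  · have : ‖y i‖ < ‖x‖ := by
      calc ‖y i‖ = ‖x i + (y i - x i)‖ := by rw [add_sub_cancel]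
        _ ≤ max ‖x i‖ ‖y i - x i‖ := IsUltrametricDist.norm_add_le_max _ _
        _ < ‖x‖ := max_lt hxi hi
    simp [this.ne, hxi.ne]

variable [AddCommGroup N]

noncomputable def leadingValue (lam : Fˣ → N) (x : ι → F) : N :=
  Function.extend Units.val lam 0 (x (leadingIndex x))

lemma leadingValue_smul {lam : Fˣ → N} (hlam : ∀ a b : Fˣ, lam (a * b) = lam a + lam b)
    (c : Fˣ) {x : ι → F} (hx : x ≠ 0) :
    leadingValue lam ((c : F) • x) = lam c + leadingValue lam x := by
  set u := Units.mk0 _ (apply_leadingIndex_ne_zero hx)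
  have hu : x (leadingIndex x) = u := rfl
  have hext := (Units.val_injective (α := F)).extend_apply lam (0 : F → N)
  rw [leadingValue, leadingValue, leadingIndex_smul c.ne_zero, Pi.smul_apply, smul_eq_mul, hu,
    ← Units.val_mul, hext, hext, hlam]

lemma continuousAt_leadingValue [IsUltrametricDist F] [TopologicalSpace N] {lam : Fˣ → N}
    (hlamc : Continuous lam) {x : ι → F} (hx : x ≠ 0) :
    ContinuousAt (leadingValue lam) x := by
  set i := leadingIndex x
  have hlocal : leadingValue lam =ᶠ[𝓝 x] fun y => Function.extend Units.val lam 0 (y i) := by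
    filter_upwards [Metric.ball_mem_nhds x (norm_pos_iff.2 hx)] with y hy
    rw [leadingValue, leadingIndex_eq_of_norm_sub_lt (by rwa [← dist_eq_norm])]
  have hext : ContinuousAt (Function.extend Units.val lam 0) (x i) := by
    rw [← Units.val_mk0 (apply_leadingIndex_ne_zero hx),
      ← IsOpenUnits.isOpenEmbedding_unitsVal.continuousAt_iff,
      Function.extend_comp Units.val_injective]
    exact hlamc.continuousAt
  exact (ContinuousAt.comp (f := fun y : ι → F => y i) hext (continuousAt_apply i x)).congr
    hlocal.symm

end LeadingCoordinate

section Plucker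

open Matrix

-- Cauchy–Binet, summed over all maps `e` rather than increasing ones.
lemma Matrix.det_mul_eq_sum_det_submatrix {m k R : Type*} [Fintype m] [DecidableEq m] [Fintype k]
    [CommRing R] (C : Matrix m k R) (B : Matrix k m R) :
    (C * B).det = ∑ e : m → k, (∏ i, C i (e i)) * (B.submatrix e id).det := by
  have hrows : C * B = fun i => ∑ j, C i j • B j := by
    ext i l
    simp [mul_apply, Finset.sum_apply]
  have hexpand := (detRowAlternating (n := m) (R := R)).toMultilinearMap.map_sum
    fun i j => C i j • B j
  simp only [MultilinearMap.map_smul_univ, smul_eq_mul] at hexpand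
  rw [hrows]
  exact hexpand

lemma Matrix.exists_det_submatrix_ne_zero_of_mul_eq_one {m k K : Type*} [Fintype m]
    [DecidableEq m] [Fintype k] [Field K] {C : Matrix m k K} {B : Matrix k m K} (h : C * B = 1) :
    ∃ e : m → k, (B.submatrix e id).det ≠ 0 := by
  have hsum := congrArg det h
  rw [det_one, det_mul_eq_sum_det_submatrix] at hsum
  obtain ⟨e, -, he⟩ := Finset.exists_ne_zero_of_sum_ne_zero (hsum ▸ one_ne_zero)
  exact ⟨e, right_ne_zero_of_mul he⟩

variable {F : Type*} [Field F] {n r : ℕ}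

def pluckerCoords (hrn : r ≤ n) (g : GL (Fin n) F) : (Fin r → Fin n) → F :=
  fun e => ((g : Matrix (Fin n) (Fin n) F).submatrix e (Fin.castLE hrn)).det

lemma pluckerCoords_ne_zero (hrn : r ≤ n) (g : GL (Fin n) F) : pluckerCoords hrn g ≠ 0 := by
  have hinv : ((g⁻¹ : GL (Fin n) F) : Matrix (Fin n) (Fin n) F).submatrix (Fin.castLE hrn) id *
      (g : Matrix (Fin n) (Fin n) F).submatrix id (Fin.castLE hrn) = 1 := by
    rw [← submatrix_mul _ _ _ _ _ Function.bijective_id, Units.inv_mul,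
      submatrix_one _ (Fin.castLE_injective hrn)]
  obtain ⟨e, he⟩ := exists_det_submatrix_ne_zero_of_mul_eq_one hinv
  exact fun h => he (congrFun h e)

lemma Ablock_eq_submatrix (hrn : r ≤ n) (g : GL (Fin n) F) :
    Ablock r hrn g = (g : Matrix (Fin n) (Fin n) F).submatrix (Fin.castLE hrn) (Fin.castLE hrn) :=
  rfl

lemma submatrix_mul_castLE_of_mem_parabolic (hrn : r ≤ n) (g : GL (Fin n) F) {p : GL (Fin n) F}
    (hp : p ∈ Parabolic F n r) (e : Fin r → Fin n) :
    ((g * p : GL (Fin n) F) : Matrix (Fin n) (Fin n) F).submatrix e (Fin.castLE hrn) =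
      (g : Matrix (Fin n) (Fin n) F).submatrix e (Fin.castLE hrn) * Ablock r hrn p := by
  ext i j
  rw [Ablock_eq_submatrix, mul_apply, submatrix_apply, Units.val_mul, mul_apply]
  refine (Fintype.sum_of_injective _ (Fin.castLE_injective hrn) _ _ (fun k hk => ?_)
    (fun _ => rfl)).symm
  rw [Fin.range_castLE, Set.mem_ofPred_eq, not_lt] at hk
  rw [hp k (Fin.castLE hrn j) hk j.isLt, mul_zero]

lemma pluckerCoords_mul_of_mem_parabolic (hrn : r ≤ n) (g : GL (Fin n) F) {p : GL (Fin n) F}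
    (hp : p ∈ Parabolic F n r) :
    pluckerCoords hrn (g * p) = (Ablock r hrn p).det • pluckerCoords hrn g := by
  ext e
  rw [Pi.smul_apply, smul_eq_mul, pluckerCoords, submatrix_mul_castLE_of_mem_parabolic hrn g hp,
    det_mul, mul_comm, pluckerCoords]

lemma continuous_pluckerCoords {F : Type*} [Field F] [TopologicalSpace F] [IsTopologicalRing F]
    (hrn : r ≤ n) : Continuous (pluckerCoords (F := F) hrn) :=
  continuous_pi fun e =>
    (Units.continuous_val.matrix_submatrix e (Fin.castLE hrn)).matrix_det

end Plucker

section DiagonalConjugation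

open Matrix

variable {ι R : Type*} [Fintype ι] [DecidableEq ι] [CommRing R]

def diagonalGL (d : ι → Rˣ) : GL ι R :=
  ⟨diagonal fun i => d i, diagonal fun i => ↑(d i)⁻¹, by simp, by simp⟩

lemma diagonalGL_one : diagonalGL (1 : ι → Rˣ) = 1 :=
  Units.ext (by simp [diagonalGL])

def permGL (σ : Equiv.Perm ι) : GL ι R :=
  ⟨σ.permMatrix R, σ⁻¹.permMatrix R, by rw [← permMatrix_mul, inv_mul_cancel, permMatrix_one],
    by rw [← permMatrix_mul, mul_inv_cancel, permMatrix_one]⟩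

lemma permGL_mul_diagonalGL_mul_inv (σ : Equiv.Perm ι) (d : ι → Rˣ) :
    permGL σ * diagonalGL d * (permGL σ)⁻¹ = diagonalGL (d ∘ σ) := by
  apply Units.ext
  change σ.toPEquiv.toMatrix * diagonal (fun i => (d i : R)) * σ⁻¹.toPEquiv.toMatrix = _
  rw [PEquiv.toMatrix_toPEquiv_mul, PEquiv.mul_toMatrix_toPEquiv, submatrix_submatrix,
    Equiv.Perm.inv_def, Equiv.symm_symm]
  exact submatrix_diagonal_equiv _ σ

end DiagonalConjugation

section ParabolicCharacter

variable {F N : Type*} [Field F] [AddCommGroup N] {n r : ℕ}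

lemma diagonalGL_mem_parabolic (d : Fin n → Fˣ) : diagonalGL d ∈ Parabolic F n r :=
  fun i j hi hj => Matrix.diagonal_apply_ne _ (by rintro rfl; omega)

lemma AblockDetUnit_diagonalGL (hrn : r ≤ n) (d : Fin n → Fˣ) :
    AblockDetUnit hrn (diagonalGL d) (diagonalGL_mem_parabolic d) =
      ∏ k : Fin r, d (Fin.castLE hrn k) := by
  apply Units.ext
  rw [AblockDetUnit, IsUnit.unit_spec, Ablock_eq_submatrix, Units.coe_prod]
  change ((Matrix.diagonal fun i => (d i : F)).submatrix _ _).det = _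
  rw [Matrix.submatrix_diagonal _ _ (Fin.castLE_injective hrn), Matrix.det_diagonal]
  rfl

theorem eq_zero_of_hom_eq_comp_AblockDetUnit (hr : 0 < r) (hrn : r < n) {f : GL (Fin n) F → N}
    (hf : ∀ g h, f (g * h) = f g + f h) {χ : Fˣ → N}
    (hfχ : ∀ p (hp : p ∈ Parabolic F n r), f p = χ (AblockDetUnit hrn.le p hp)) : χ = 0 := by
  have hf1 : f 1 = 0 := by simpa using hf 1 1
  have hconj : ∀ g x, f (g * x * g⁻¹) = f x := fun g x => by
    rw [hf, hf, add_right_comm, ← hf, mul_inv_cancel, hf1, zero_add]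
  have hdiag : ∀ d : Fin n → Fˣ, f (diagonalGL d) = χ (∏ k : Fin r, d (Fin.castLE hrn.le k)) :=
    fun d => by rw [hfχ _ (diagonalGL_mem_parabolic d), AblockDetUnit_diagonalGL]
  set j₀ : Fin r := ⟨0, hr⟩
  set i₀ : Fin n := Fin.castLE hrn.le j₀
  set i₁ : Fin n := ⟨r, hrn⟩
  have hχ1 : χ 1 = 0 := by
    simpa [diagonalGL_one, hf1] using (hdiag 1).symm
  funext a
  calc χ a = f (diagonalGL (Pi.mulSingle i₀ a)) := by
        rw [hdiag]
        simp [i₀, Pi.mulSingle_apply]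
    _ = f (diagonalGL (Pi.mulSingle i₁ a)) := by
        rw [← hconj (permGL (Equiv.swap i₀ i₁)), permGL_mul_diagonalGL_mul_inv,
          Pi.mulSingle_comp_equiv, Equiv.symm_swap, Equiv.swap_apply_left]
    _ = 0 := by
        rw [hdiag, ← hχ1]
        congr 1
        refine Finset.prod_eq_one fun k _ => Pi.mulSingle_eq_of_ne ?_ _
        simp [i₁, Fin.ext_iff, k.isLt.ne]

end ParabolicCharacter

section Extension

variable {F : Type*} [NontriviallyNormedField F] [IsUltrametricDist F] [CompleteSpace F]
  [LocallyCompactSpace F] {n r : ℕ} (hrn : r ≤ n)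
  {N : Type*} [AddCommGroup N] [TopologicalSpace N] [IsTopologicalAddGroup N]

lemma exists_mem_Etilde_snd_eq_one {lam : Fˣ → N} (hlamc : Continuous lam)
    (hlam : ∀ a b : Fˣ, lam (a * b) = lam a + lam b) :
    ∃ q : Etilde F n r hrn N lam, q.1.2 = 1 := by
  have : Nonempty (Fin r → Fin n) := ⟨Fin.castLE hrn⟩
  refine ⟨⟨(fun g => leadingValue lam (pluckerCoords hrn g), 1), ?_, fun g p hp => ?_⟩, rfl⟩
  · exact continuous_iff_continuousAt.2 fun g =>
      (continuousAt_leadingValue hlamc (pluckerCoords_ne_zero hrn g)).comp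
        (continuous_pluckerCoords hrn).continuousAt
  · change leadingValue lam _ = leadingValue lam _ + (1 : ℤ) • _
    rw [one_smul, add_comm, pluckerCoords_mul_of_mem_parabolic hrn g hp, AblockDetUnit,
      ← leadingValue_smul hlam _ (pluckerCoords_ne_zero hrn g), IsUnit.unit_spec]

lemma translate_sub_mem_steinbergFns (lam : Fˣ → N) (q : Etilde F n r hrn N lam)
    (h : GL (Fin n) F) : (fun g => q.1.1 (h⁻¹ * g) - q.1.1 g) ∈ SteinbergFns F n r N := by
  refine ⟨(q.2.1.comp (continuous_const_mul h⁻¹)).sub q.2.1, fun g p hp => ?_⟩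
  beta_reduce
  rw [← mul_assoc, q.2.2 _ p hp, q.2.2 g p hp, add_sub_add_right_eq_sub]

lemma Etrans_mk_sub_mk (lam : Fˣ → N) (q : Etilde F n r hrn N lam) (h : GL (Fin n) F) :
    Etrans F n r hrn N lam h (QuotientAddGroup.mk q) - QuotientAddGroup.mk q =
      stHom F n r hrn N lam ⟨_, translate_sub_mem_steinbergFns hrn lam q h⟩ := by
  rw [Etrans_mk, ← QuotientAddGroup.mk_sub]
  exact congrArg _ (Subtype.ext (Prod.ext rfl (sub_self q.1.2)))

lemma exists_const_of_stHom_eq {lam : Fˣ → N} {v w : SteinbergFns F n r N}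
    (h : stHom F n r hrn N lam v = stHom F n r hrn N lam w) :
    ∃ c, ∀ g, v.1 g - w.1 g = c := by
  obtain ⟨-, c, hc⟩ := QuotientAddGroup.eq.1 h
  exact ⟨-c, fun g => by rw [← show -v.1 g + w.1 g = c from hc g]; abel⟩

theorem exists_const_translate_sub {lam mu : Fˣ → N}
    (θ : Esp F n r hrn N lam →+ Esp F n r hrn N mu)
    (hequiv : ∀ (h : GL (Fin n) F) (x : Esp F n r hrn N lam),
      θ (Etrans F n r hrn N lam h x) = Etrans F n r hrn N mu h (θ x))
    (hst : ∀ v : SteinbergFns F n r N, θ (stHom F n r hrn N lam v) = stHom F n r hrn N mu v)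
    {q : Etilde F n r hrn N lam} {q' : Etilde F n r hrn N mu}
    (hq : θ (QuotientAddGroup.mk q) = QuotientAddGroup.mk q') (h : GL (Fin n) F) :
    ∃ c, ∀ g, (q'.1.1 - q.1.1) (h⁻¹ * g) - (q'.1.1 - q.1.1) g = c := by
  have htrans := congrArg θ (Etrans_mk_sub_mk hrn lam q h)
  rw [map_sub, hequiv, hq, hst, Etrans_mk_sub_mk] at htrans
  obtain ⟨c, hc⟩ := exists_const_of_stHom_eq hrn htrans
  exact ⟨c, fun g => by rw [← hc g]; simp only [Pi.sub_apply]; abel⟩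

end Extension

theorem extension_class_injective_general
    {F : Type*} [NontriviallyNormedField F] [IsUltrametricDist F]
    [CompleteSpace F] [LocallyCompactSpace F]
    {n r : ℕ} (hr : 0 < r) (hrlt : r < n)
    {N : Type*} [AddCommGroup N] [TopologicalSpace N] [IsTopologicalAddGroup N]
    (lam mu : Fˣ → N)
    (hlamc : Continuous lam) (hlam : ∀ a b : Fˣ, lam (a * b) = lam a + lam b)
    (θ : Esp F n r hrlt.le N lam ≃+ Esp F n r hrlt.le N mu)
    (hequiv : ∀ (h : GL (Fin n) F) (x : Esp F n r hrlt.le N lam),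
      θ (Etrans F n r hrlt.le N lam h x) = Etrans F n r hrlt.le N mu h (θ x))
    (hdeg : ∀ x : Esp F n r hrlt.le N lam,
      Edeg F n r hrlt.le N mu (θ x) = Edeg F n r hrlt.le N lam x)
    (hst : ∀ v : ↥(SteinbergFns F n r N),
      θ (stHom F n r hrlt.le N lam v) = stHom F n r hrlt.le N mu v) :
    lam = mu := by
  obtain ⟨q, hq⟩ := exists_mem_Etilde_snd_eq_one hrlt.le hlamc hlam
  obtain ⟨q', hq'⟩ := QuotientAddGroup.mk_surjective (θ (QuotientAddGroup.mk q))
  have hq'deg : q'.1.2 = 1 := by simpa [← hq', hq] using hdeg (QuotientAddGroup.mk q)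
  set D := q'.1.1 - q.1.1
  have hD : ∀ h g, D (h * g) - D g = D h - D 1 := fun h g => by
    obtain ⟨c, hc⟩ := exists_const_translate_sub hrlt.le θ.toAddMonoidHom hequiv hst hq'.symm h⁻¹
    simpa only [inv_inv, mul_one] using (hc g).trans (hc 1).symm
  have hDP : ∀ p (hp : p ∈ Parabolic F n r),
      D p - D 1 = (mu - lam) (AblockDetUnit hrlt.le p hp) := fun p hp => by
    have hq'P := q'.2.2 1 p hp
    have hqP := q.2.2 1 p hp
    rw [one_mul, hq'deg, one_smul] at hq'P
    rw [one_mul, hq, one_smul] at hqP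
    simp only [D, Pi.sub_apply, hq'P, hqP]
    abel
  have hχ := eq_zero_of_hom_eq_comp_AblockDetUnit hr hrlt (f := fun g => D g - D 1)
    (fun g h => by rw [← hD g h]; abel) hDP
  exact (sub_eq_zero.1 hχ).symm

/-- If the extensions `E(λ)` and `E(μ)` of `ℤ` by `v_r(N)` attached to
continuous homomorphisms `λ, μ : F^× → N` are equivalent — i.e. there is a
`GL_n(F)`-equivariant group isomorphism `E(λ) → E(μ)` restricting to the identity on the
common copy of `v_r(N)` and commuting with the degree maps — then `λ = μ`. -/
theorem extension_class_injective
    {F : Type*} [NontriviallyNormedField F] [IsUltrametricDist F]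
    [CompleteSpace F] [LocallyCompactSpace F]
    {n r : ℕ} (hn : 2 ≤ n) (hr : 0 < r) (hrlt : r < n)
    {N : Type*} [AddCommGroup N] [TopologicalSpace N] [IsTopologicalAddGroup N]
    (lam mu : Fˣ → N)
    (hlamc : Continuous lam) (hlam : ∀ a b : Fˣ, lam (a * b) = lam a + lam b)
    (hmuc : Continuous mu) (hmu : ∀ a b : Fˣ, mu (a * b) = mu a + mu b)
    (θ : Esp F n r hrlt.le N lam ≃+ Esp F n r hrlt.le N mu)
    (hequiv : ∀ (h : GL (Fin n) F) (x : Esp F n r hrlt.le N lam),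
      θ (Etrans F n r hrlt.le N lam h x) = Etrans F n r hrlt.le N mu h (θ x))
    (hdeg : ∀ x : Esp F n r hrlt.le N lam,
      Edeg F n r hrlt.le N mu (θ x) = Edeg F n r hrlt.le N lam x)
    (hst : ∀ v : ↥(SteinbergFns F n r N),
      θ (stHom F n r hrlt.le N lam v) = stHom F n r hrlt.le N mu v) :
    lam = mu :=
  extension_class_injective_general hr hrlt lam mu hlamc hlam θ hequiv hdeg hst
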